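/- arXiv:math/0304418 — 3 statements merged into one kernel-verified Lean document; each statement's English description precedes it below -/
import Mathlib

section
/- Let d ≥ 1 be an integer and let s' > d be a real number. There exists a constant a ∈ (1, ∞) such that for all x, y ∈ ℤ^d, ∑_{z ∈ ℤ^d} (max(|x − z|, 1))^{−s'} · (max(|y − z|, 1))^{−s'} ≤ a · (max(|x − y|, 1))^{−s'}, where |·| denotes the Euclidean (ℓ²) norm on ℤ^d. -/
open scoped BigOperators

/-- The Euclidean (ℓ²) norm of a lattice point in ℤ^d. -/
noncomputable def eucNorm (d : ℕ) (v : Fin d → ℤ) : ℝ :=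
  Real.sqrt (∑ i, ((v i : ℝ)) ^ 2)

namespace LatConv

noncomputable def emb (d : ℕ) (v : Fin d → ℤ) : EuclideanSpace ℝ (Fin d) := WithLp.toLp 2 (fun i => (v i : ℝ))

lemma eucNorm_eq (d : ℕ) (v : Fin d → ℤ) : eucNorm d v = ‖emb d v‖ := by
  rw [EuclideanSpace.norm_eq]
  simp [Real.norm_eq_abs, sq_abs, eucNorm, emb]

lemma eucNorm_nonneg (d : ℕ) (v : Fin d → ℤ) : 0 ≤ eucNorm d v := Real.sqrt_nonneg _

lemma eucNorm_sub_le (d : ℕ) (u v w : Fin d → ℤ) :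
    eucNorm d (u - w) ≤ eucNorm d (u - v) + eucNorm d (v - w) := by
  rw [eucNorm_eq, eucNorm_eq, eucNorm_eq]
  have h : emb d (u - w) = emb d (u - v) + emb d (v - w) := by
    ext i
    simp only [emb, Pi.sub_apply, Pi.add_apply, PiLp.add_apply, PiLp.toLp_apply]
    push_cast
    ring
  rw [h]; exact norm_add_le _ _

lemma coord_le_eucNorm (d : ℕ) (v : Fin d → ℤ) (i : Fin d) : |((v i : ℝ))| ≤ eucNorm d v := by
  rw [← Real.sqrt_sq_eq_abs]
  apply Real.sqrt_le_sqrt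
  exact Finset.single_le_sum (f := fun j => ((v j : ℝ))^2) (fun j _ => sq_nonneg _)
    (Finset.mem_univ i)

noncomputable def latPhi (d : ℕ) (s' : ℝ) (v : Fin d → ℤ) : ℝ :=
  (max (eucNorm d v) 1) ^ (-s')

lemma one_le_maxN (d : ℕ) (v : Fin d → ℤ) : 1 ≤ max (eucNorm d v) 1 := le_max_right _ _

lemma maxN_pos (d : ℕ) (v : Fin d → ℤ) : 0 < max (eucNorm d v) 1 :=
  lt_of_lt_of_le one_pos (one_le_maxN d v)

lemma latPhi_pos (d : ℕ) (s' : ℝ) (v : Fin d → ℤ) : 0 < latPhi d s' v :=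
  Real.rpow_pos_of_pos (maxN_pos d v) _

lemma latPhi_le_one (d : ℕ) {s' : ℝ} (hs : 0 ≤ s') (v : Fin d → ℤ) : latPhi d s' v ≤ 1 :=
  Real.rpow_le_one_of_one_le_of_nonpos (one_le_maxN d v) (neg_nonpos.mpr hs)

lemma latPhi_zero (d : ℕ) (s' : ℝ) : latPhi d s' 0 = 1 := by
  have h : eucNorm d 0 = 0 := by simp [eucNorm]
  simp [latPhi, h]

/-- One-dimensional summability. -/
lemma summable_g {t : ℝ} (ht : 1 < t) :
    Summable (fun n : ℤ => (max |(n : ℝ)| 1) ^ (-t)) := by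
  have h1 : Summable fun n : ℤ => |(n : ℝ)| ^ (-t) := Real.summable_abs_int_rpow ht
  have h2 : Summable (fun n : ℤ => if n = 0 then (1 : ℝ) else 0) := by
    apply summable_of_ne_finset_zero (s := {(0 : ℤ)})
    intro n hn
    simp only [Finset.mem_singleton] at hn
    simp [hn]
  apply Summable.of_nonneg_of_le
    (fun n => Real.rpow_nonneg (le_trans zero_le_one (le_max_right _ _)) _)
    (fun n => ?_) (h1.add h2)
  have htne : (-t) ≠ 0 := ne_of_lt (by linarith)
  by_cases hn : n = 0
  · subst hn
    simp only [Int.cast_zero, abs_zero]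
    rw [max_eq_right zero_le_one, Real.one_rpow, Real.zero_rpow htne]
    norm_num
  · have h1' : (1 : ℝ) ≤ |(n : ℝ)| := by
      rw [← Int.cast_abs]; exact_mod_cast Int.one_le_abs (by simpa using hn)
    have : max |(n : ℝ)| 1 = |(n : ℝ)| := max_eq_left h1'
    rw [this]
    simp [hn]

/-- Summability of products over pi types. -/
lemma summable_pi (g : ℤ → ℝ) (hg0 : ∀ n, 0 ≤ g n) (hg : Summable g) :
    ∀ m : ℕ, Summable (fun z : Fin m → ℤ => ∏ i, g (z i)) := by
  intro m
  induction m with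
  | zero =>
    simp only [Finset.univ_eq_empty, Finset.prod_empty]
    exact summable_of_finite_support (Set.toFinite _)
  | succ n ih =>
    have hfe : ((fun z : Fin (n+1) → ℤ => ∏ i, g (z i)) ∘ (Fin.consEquiv fun _ => ℤ))
        = fun p : ℤ × (Fin n → ℤ) => g p.1 * ∏ i, g (p.2 i) := by
      funext p
      simp [Fin.consEquiv, Fin.prod_univ_succ]
    have h := Summable.mul_of_nonneg hg ih hg0
      (fun z => Finset.prod_nonneg fun i _ => hg0 _)
    rw [← hfe] at h
    exact ((Fin.consEquiv (fun _ => ℤ)).summable_iff).mp h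

lemma summable_latPhi (d : ℕ) (hd : 1 ≤ d) {s' : ℝ} (hs' : (d : ℝ) < s') :
    Summable (latPhi d s') := by
  have hd0 : (0 : ℝ) < d := by exact_mod_cast hd
  set t := s' / d with ht_def
  have ht : 1 < t := (one_lt_div hd0).mpr hs'
  have ht0 : 0 < t := lt_trans one_pos ht
  have hg0 : ∀ n : ℤ, 0 ≤ (max |(n : ℝ)| 1) ^ (-t) :=
    fun n => Real.rpow_nonneg (le_trans zero_le_one (le_max_right _ _)) _
  apply Summable.of_nonneg_of_le (fun v => (latPhi_pos d s' v).le) (fun v => ?_)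
    (summable_pi _ hg0 (summable_g ht) d)
  -- latPhi d s' v ≤ ∏ i, (max |v i| 1)^(-t)
  set M := max (eucNorm d v) 1 with hM
  have hM1 : 1 ≤ M := one_le_maxN d v
  have hMpos : 0 < M := maxN_pos d v
  have hfac : ∀ i : Fin d, max |((v i : ℝ))| 1 ≤ M :=
    fun i => max_le_max (coord_le_eucNorm d v i) le_rfl
  have hfacpos : ∀ i : Fin d, (0 : ℝ) < max |((v i : ℝ))| 1 :=
    fun i => lt_of_lt_of_le one_pos (le_max_right _ _)
  have hprod_le : (∏ i : Fin d, max |((v i : ℝ))| 1) ≤ M ^ d := by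
    calc (∏ i : Fin d, max |((v i : ℝ))| 1) ≤ ∏ _i : Fin d, M :=
          Finset.prod_le_prod (fun i _ => (hfacpos i).le) (fun i _ => hfac i)
      _ = M ^ d := by simp
  have hprodpos : (0 : ℝ) < ∏ i : Fin d, max |((v i : ℝ))| 1 :=
    Finset.prod_pos (fun i _ => hfacpos i)
  have hstep1 : latPhi d s' v = (M ^ d) ^ (-t) := by
    rw [latPhi, ← hM, ← Real.rpow_natCast_mul hMpos.le]
    congr 1
    rw [ht_def]
    field_simp
  have hstep2 : (M ^ d) ^ (-t) ≤ (∏ i : Fin d, max |((v i : ℝ))| 1) ^ (-t) :=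
    (Real.rpow_le_rpow_iff_of_neg (pow_pos hMpos d) hprodpos
      (neg_neg_of_pos ht0)).mpr hprod_le
  have hstep3 : (∏ i : Fin d, max |((v i : ℝ))| 1) ^ (-t)
      = ∏ i : Fin d, (max |((v i : ℝ))| 1) ^ (-t) :=
    (Real.finset_prod_rpow _ _ (fun i _ => (hfacpos i).le) _).symm
  rw [hstep1, ← hstep3]
  exact hstep2

/-- The key pointwise inequality. -/
lemma key (d : ℕ) {s' : ℝ} (hs : 0 < s') (u w : Fin d → ℤ) (x y z : Fin d → ℤ)
    (hu : u = x - z) (hw : w = y - z) :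
    latPhi d s' u * latPhi d s' w
      ≤ 2 ^ s' * latPhi d s' (x - y) * (latPhi d s' u + latPhi d s' w) := by
  set A := max (eucNorm d u) 1 with hA
  set B := max (eucNorm d w) 1 with hB
  set C := max (eucNorm d (x - y)) 1 with hC
  have hA1 : 1 ≤ A := one_le_maxN d u
  have hB1 : 1 ≤ B := one_le_maxN d w
  have hApos : (0 : ℝ) < A := lt_of_lt_of_le one_pos hA1
  have hBpos : (0 : ℝ) < B := lt_of_lt_of_le one_pos hB1
  have hCpos : (0 : ℝ) < C := maxN_pos d _
  have htri : C ≤ 2 * max A B := by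
    have h1 : eucNorm d (x - y) ≤ eucNorm d (x - z) + eucNorm d (z - y) :=
      eucNorm_sub_le d x z y
    have h2 : eucNorm d (z - y) = eucNorm d w := by
      rw [eucNorm_eq, eucNorm_eq, hw]
      have : emb d (z - y) = -(emb d (y - z)) := by ext i; simp [emb]
      rw [this, norm_neg]
    have h3 : eucNorm d (x - y) ≤ A + B := by
      calc eucNorm d (x - y) ≤ eucNorm d (x - z) + eucNorm d (z - y) := h1
        _ = eucNorm d u + eucNorm d w := by rw [h2, hu]
        _ ≤ A + B := add_le_add (le_max_left _ _) (le_max_left _ _)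
    have h4 : A + B ≤ 2 * max A B := by
      rcases le_total A B with h | h <;> simp [max_eq_right, max_eq_left, h] <;> nlinarith
    have h5 : (1 : ℝ) ≤ 2 * max A B := by
      have : (1 : ℝ) ≤ max A B := le_trans hA1 (le_max_left _ _)
      linarith
    exact max_le (le_trans h3 h4) h5
  have h2pow : (0:ℝ) < 2 ^ s' := Real.rpow_pos_of_pos two_pos _
  have hcancel : (2:ℝ) ^ s' * 2 ^ (-s') = 1 := by
    rw [← Real.rpow_add two_pos]; simp
  -- main bound on the larger side
  have hmax : (max A B) ^ (-s') ≤ 2 ^ s' * C ^ (-s') := by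
    have hMABpos : (0 : ℝ) < max A B := lt_of_lt_of_le hApos (le_max_left _ _)
    have h1 : (2 * max A B) ^ (-s') ≤ C ^ (-s') :=
      (Real.rpow_le_rpow_iff_of_neg (by positivity) hCpos (neg_neg_of_pos hs)).mpr htri
    have h2 : (2 * max A B) ^ (-s') = 2 ^ (-s') * (max A B) ^ (-s') :=
      Real.mul_rpow (by norm_num) hMABpos.le
    have h3 : 2 ^ (-s') * (max A B) ^ (-s') ≤ C ^ (-s') := h2 ▸ h1
    calc (max A B) ^ (-s') = 2 ^ s' * (2 ^ (-s') * (max A B) ^ (-s')) := by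
          rw [← mul_assoc, hcancel, one_mul]
      _ ≤ 2 ^ s' * C ^ (-s') := by
          exact mul_le_mul_of_nonneg_left h3 h2pow.le
  have hApow : (0:ℝ) < A ^ (-s') := Real.rpow_pos_of_pos hApos _
  have hBpow : (0:ℝ) < B ^ (-s') := Real.rpow_pos_of_pos hBpos _
  have hCpow : (0:ℝ) < C ^ (-s') := Real.rpow_pos_of_pos hCpos _
  show A ^ (-s') * B ^ (-s') ≤ 2 ^ s' * C ^ (-s') * (A ^ (-s') + B ^ (-s'))
  rcases le_total A B with h | h
  · have hBe : max A B = B := max_eq_right h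
    have hB' : B ^ (-s') ≤ 2 ^ s' * C ^ (-s') := hBe ▸ hmax
    calc A ^ (-s') * B ^ (-s') ≤ A ^ (-s') * (2 ^ s' * C ^ (-s')) :=
          mul_le_mul_of_nonneg_left hB' hApow.le
      _ ≤ (A ^ (-s') + B ^ (-s')) * (2 ^ s' * C ^ (-s')) := by nlinarith
      _ = 2 ^ s' * C ^ (-s') * (A ^ (-s') + B ^ (-s')) := by ring
  · have hAe : max A B = A := max_eq_left h
    have hA' : A ^ (-s') ≤ 2 ^ s' * C ^ (-s') := hAe ▸ hmax
    calc A ^ (-s') * B ^ (-s') ≤ (2 ^ s' * C ^ (-s')) * B ^ (-s') :=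
          mul_le_mul_of_nonneg_right hA' hBpow.le
      _ ≤ (2 ^ s' * C ^ (-s')) * (A ^ (-s') + B ^ (-s')) := by nlinarith
      _ = 2 ^ s' * C ^ (-s') * (A ^ (-s') + B ^ (-s')) := by ring

end LatConv

open LatConv

/-- For d ≥ 1 and s' > d there is a constant a ∈ (1, ∞) such that for all
x, y ∈ ℤ^d, ∑_z (max(|x−z|,1))^{−s'}·(max(|y−z|,1))^{−s'} ≤ a·(max(|x−y|,1))^{−s'}. -/
theorem lattice_convolution_bound (d : ℕ) (hd : 1 ≤ d) (s' : ℝ) (hs' : (d : ℝ) < s') :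
    ∃ a : ℝ, 1 < a ∧ ∀ x y : Fin d → ℤ,
      (∑' z : Fin d → ℤ,
          (max (eucNorm d (x - z)) 1) ^ (-s') * (max (eucNorm d (y - z)) 1) ^ (-s'))
        ≤ a * (max (eucNorm d (x - y)) 1) ^ (-s') := by
  have hs0 : (0 : ℝ) < s' := lt_of_le_of_lt (by exact_mod_cast Nat.zero_le d) hs'
  have hK : Summable (latPhi d s') := summable_latPhi d hd hs'
  set K := ∑' z : Fin d → ℤ, latPhi d s' z with hKdef
  have hK1 : 1 ≤ K := by
    have := Summable.le_tsum hK 0 (fun z _ => (latPhi_pos d s' z).le)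
    rwa [latPhi_zero d s'] at this
  have h2pow : (1:ℝ) ≤ 2 ^ s' := Real.one_le_rpow (by norm_num) hs0.le
  refine ⟨2 ^ s' * (2 * K), ?_, ?_⟩
  · nlinarith
  intro x y
  have hsub : ∀ x : Fin d → ℤ, Summable (fun z : Fin d → ℤ => latPhi d s' (x - z)) := by
    intro x
    exact (Equiv.summable_iff (Equiv.subLeft x)).mpr hK
  have htsub : ∀ x : Fin d → ℤ, (∑' z : Fin d → ℤ, latPhi d s' (x - z)) = K := by
    intro x
    exact Equiv.tsum_eq (Equiv.subLeft x) (latPhi d s')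
  have hbound : ∀ z : Fin d → ℤ,
      latPhi d s' (x - z) * latPhi d s' (y - z)
        ≤ 2 ^ s' * latPhi d s' (x - y) * (latPhi d s' (x - z) + latPhi d s' (y - z)) :=
    fun z => key d hs0 (x - z) (y - z) x y z rfl rfl
  have hsumbound : Summable (fun z : Fin d → ℤ =>
      2 ^ s' * latPhi d s' (x - y) * (latPhi d s' (x - z) + latPhi d s' (y - z))) :=
    ((hsub x).add (hsub y)).mul_left _
  have hsummand : Summable (fun z : Fin d → ℤ =>
      latPhi d s' (x - z) * latPhi d s' (y - z)) :=
    Summable.of_nonneg_of_le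
      (fun z => mul_nonneg (latPhi_pos d s' _).le (latPhi_pos d s' _).le) hbound hsumbound
  have hle := Summable.tsum_le_tsum hbound hsummand hsumbound
  have hrhs : (∑' z : Fin d → ℤ,
      2 ^ s' * latPhi d s' (x - y) * (latPhi d s' (x - z) + latPhi d s' (y - z)))
      = 2 ^ s' * (2 * K) * latPhi d s' (x - y) := by
    rw [tsum_mul_left, Summable.tsum_add (hsub x) (hsub y), htsub x, htsub y]
    ring
  calc (∑' z : Fin d → ℤ,
          (max (eucNorm d (x - z)) 1) ^ (-s') * (max (eucNorm d (y - z)) 1) ^ (-s'))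
      = ∑' z : Fin d → ℤ, latPhi d s' (x - z) * latPhi d s' (y - z) := rfl
    _ ≤ 2 ^ s' * (2 * K) * latPhi d s' (x - y) := hrhs ▸ hle
    _ = 2 ^ s' * (2 * K) * (max (eucNorm d (x - y)) 1) ^ (-s') := rfl
end

section
/- For every α ∈ [0, 1), there exists a constant C = C(α) < ∞ such that for all q, q' ∈ [0, 1] with (1 − q') ≥ (1 − q)^α, the quantity ψ(q', q) = (1 − q') log((1 − q')/(1 − q)) − q' log(q/q') satisfies ψ(q', q) ≥ (1 − α)(1 − q')[log(1/(1 − q)) − C]. -/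
open scoped BigOperators

/-- For every α ∈ [0,1) there is a constant C = C(α) < ∞ such that for
all q, q' ∈ [0,1] with 1 − q' ≥ (1 − q)^α, the rate function
ψ(q', q) = (1 − q')·log((1 − q')/(1 − q)) − q'·log(q/q') satisfies
ψ(q', q) ≥ (1 − α)(1 − q')[log(1/(1 − q)) − C]. -/
theorem relativeEntropy_lower_bound (α : ℝ) (hα0 : 0 ≤ α) (hα1 : α < 1) :
    ∃ C : ℝ, ∀ q q' : ℝ, 0 ≤ q → q ≤ 1 → 0 ≤ q' → q' ≤ 1 →
      (1 - q) ^ α ≤ 1 - q' →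
      (1 - α) * (1 - q') * (Real.log (1 / (1 - q)) - C) ≤
        (1 - q') * Real.log ((1 - q') / (1 - q)) - q' * Real.log (q / q') := by
  have hα : (0:ℝ) < 1 - α := by linarith
  refine ⟨1 / (1 - α), ?_⟩
  intro q q' hq0 hq1 hq'0 hq'1 hcond
  have hs0 : (0:ℝ) ≤ 1 - q' := by linarith
  have ht0 : (0:ℝ) ≤ 1 - q := by linarith
  have hcancel : (1 - α) * (1 - q') * (1 / (1 - α)) = 1 - q' := by
    field_simp
  rcases eq_or_lt_of_le ht0 with h0 | h0
  · -- q = 1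
    have hq : q = 1 := by linarith
    subst hq
    simp only [sub_self, div_zero, Real.log_zero, mul_zero, zero_sub, one_div]
    rw [Real.log_inv]
    have key : q' - 1 ≤ q' * Real.log q' := by
      rcases eq_or_lt_of_le hq'0 with h | h
      · simp [← h]
      · have hlog : Real.log (1 / q') ≤ 1 / q' - 1 :=
          Real.log_le_sub_one_of_pos (by positivity)
        rw [Real.log_div one_ne_zero (ne_of_gt h), Real.log_one] at hlog
        have := mul_le_mul_of_nonneg_left hlog (le_of_lt h)
        have h2 : q' * (1 / q' - 1) = 1 - q' := by field_simp
        nlinarith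
    have heq : (1 - α) * (1 - q') * (-(1 - α)⁻¹) = -(1 - q') := by
      field_simp
    rw [heq]
    nlinarith
  · -- 1 - q > 0
    have hs_pos : (0:ℝ) < 1 - q' :=
      lt_of_lt_of_le (Real.rpow_pos_of_pos h0 α) hcond
    have key1 : α * Real.log (1 - q) ≤ Real.log (1 - q') := by
      rw [← Real.log_rpow h0]
      exact Real.log_le_log (Real.rpow_pos_of_pos h0 α) hcond
    have key2 : q' * Real.log (q / q') ≤ 1 - q' := by
      rcases eq_or_lt_of_le hq'0 with h | h
      · simp [← h]
      rcases eq_or_lt_of_le hq0 with h2 | h2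
      · simp [← h2]; linarith
      · have hlog : Real.log (q / q') ≤ q / q' - 1 :=
          Real.log_le_sub_one_of_pos (by positivity)
        have hmul := mul_le_mul_of_nonneg_left hlog (le_of_lt h)
        have h3 : q' * (q / q' - 1) = q - q' := by field_simp
        nlinarith
    rw [Real.log_div (ne_of_gt hs_pos) (ne_of_gt h0),
        one_div, Real.log_inv]
    have hmul1 := mul_le_mul_of_nonneg_left key1 hs0
    nlinarith [mul_le_mul_of_nonneg_left key1 hs0, hcancel]
end

section
/- Consider site-bond percolation on the complete graph K_n: each of the n vertices is independently occupied with probability r and each of the n(n−1)/2 edges is independently occupied with probability p. Let |C_n| be the number of vertices in the largest connected component of the subgraph induced by occupied vertices and occupied edges. Then for all r' ∈ [0, r), p' ∈ [0, p), and n ≥ 1, P(|C_n| ≤ p' r' n) ≤ exp(−n ψ(r', r)) + exp(−(1/2)(n²(r')² − n) ψ(p', p)), where ψ is the Chernoff rate function ψ(q', q) = sup_{λ≥0}[−log(1 − q + q e^{−λ}) − λ q']. -/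
open scoped BigOperators
open MeasureTheory

/-- The Bernoulli measure on `Bool` with success probability `q` (for `q ∈ [0,1]`). -/
noncomputable def bernoulliMeasure (q : ℝ) : Measure Bool :=
  (PMF.bernoulli (min (Real.toNNReal q) 1) (min_le_right _ _)).toMeasure

/-- Configurations of site-bond percolation on the complete graph `K_n`:
a status for each of the n vertices and for each of the n(n−1)/2 edges. -/
abbrev SiteBondConfig (n : ℕ) :=
  (Fin n → Bool) × ({e : Fin n × Fin n // e.1 < e.2} → Bool)

/-- The i.i.d. site-bond percolation measure: each vertex occupied with probability r,
each edge occupied with probability p, independently. -/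
noncomputable def siteBondMeasure (n : ℕ) (r p : ℝ) : Measure (SiteBondConfig n) :=
  (Measure.pi fun _ : Fin n => bernoulliMeasure r).prod
    (Measure.pi fun _ : {e : Fin n × Fin n // e.1 < e.2} => bernoulliMeasure p)

/-- The graph on occupied vertices induced by occupied edges of a configuration. -/
def percGraph (n : ℕ) (ω : SiteBondConfig n) : SimpleGraph (Fin n) where
  Adj i j := ω.1 i = true ∧ ω.1 j = true ∧
    ((∃ h : i < j, ω.2 ⟨(i, j), h⟩ = true) ∨ (∃ h : j < i, ω.2 ⟨(j, i), h⟩ = true))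
  symm := by
    constructor
    intro i j h
    exact ⟨h.2.1, h.1, h.2.2.symm⟩
  loopless := by
    constructor
    intro i h
    rcases h.2.2 with ⟨h', _⟩ | ⟨h', _⟩ <;> exact lt_irrefl i h'

/-- The number of vertices in the largest connected component of occupied vertices
joined by occupied edges (0 if there is no occupied vertex). -/
noncomputable def largestCompCard (n : ℕ) (ω : SiteBondConfig n) : ℕ :=
  sSup {k | ∃ i, ω.1 i = true ∧ k = Set.ncard {j | (percGraph n ω).Reachable i j}}

/-- The Chernoff rate function ψ(q', q) = sup_{λ ≥ 0} [−log(1 − q + q e^{−λ}) − λ q']. -/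
noncomputable def chernoffPsi (q' q : ℝ) : ℝ :=
  sSup {x | ∃ l : ℝ, 0 ≤ l ∧ x = -Real.log (1 - q + q * Real.exp (-l)) - l * q'}

lemma psi_set_zero_mem (q' q : ℝ) :
    (0:ℝ) ∈ {x | ∃ l : ℝ, 0 ≤ l ∧ x = -Real.log (1 - q + q * Real.exp (-l)) - l * q'} :=
  ⟨0, le_refl 0, by simp⟩

lemma chernoffPsi_nonneg (q' q : ℝ) : 0 ≤ chernoffPsi q' q := by
  by_cases h : BddAbove {x | ∃ l : ℝ, 0 ≤ l ∧ x = -Real.log (1 - q + q * Real.exp (-l)) - l * q'}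
  · exact le_csSup h (psi_set_zero_mem q' q)
  · rw [chernoffPsi, csSup_of_not_bddAbove h, Real.sSup_empty]

instance bernoulliMeasure_prob (q : ℝ) : IsProbabilityMeasure (bernoulliMeasure q) :=
  PMF.toMeasure.isProbabilityMeasure _

lemma bernoulli_true (q : ℝ) (h0 : 0 ≤ q) (h1 : q ≤ 1) :
    bernoulliMeasure q {true} = ENNReal.ofReal q := by
  rw [bernoulliMeasure, PMF.toMeasure_apply_singleton _ _ (measurableSet_singleton _),
    PMF.bernoulli_apply]
  simp [min_eq_left (Real.toNNReal_le_one.mpr h1), ENNReal.ofReal]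

lemma bernoulli_false (q : ℝ) (h0 : 0 ≤ q) (h1 : q ≤ 1) :
    bernoulliMeasure q {false} = ENNReal.ofReal (1 - q) := by
  rw [bernoulliMeasure, PMF.toMeasure_apply_singleton _ _ (measurableSet_singleton _),
    PMF.bernoulli_apply]
  simp only [Bool.cond_false, min_eq_left (Real.toNNReal_le_one.mpr h1)]
  rw [ENNReal.ofReal]
  congr 1
  ext
  rw [NNReal.coe_sub (Real.toNNReal_le_one.mpr h1), Real.coe_toNNReal _ h0,
    Real.coe_toNNReal _ (by linarith), NNReal.coe_one]

lemma chernoff_bound {ι : Type*} [Fintype ι] (S : Finset ι) (q q' a : ℝ)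
    (hq' : 0 ≤ q') (hq'q : q' < q) (hq1 : q ≤ 1) (ha : a ≤ q' * S.card) :
    Measure.pi (fun _ : ι => bernoulliMeasure q)
      {x | (∑ i ∈ S, (if x i = true then (1:ℝ) else 0)) ≤ a}
      ≤ ENNReal.ofReal (Real.exp (-(S.card * chernoffPsi q' q))) := by
  classical
  have hq0 : 0 < q := lt_of_le_of_lt hq' hq'q
  set μ := Measure.pi (fun _ : ι => bernoulliMeasure q) with hμdef
  set E : Set (ι → Bool) := {x | (∑ i ∈ S, (if x i = true then (1:ℝ) else 0)) ≤ a} with hEdef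
  have hν1 : ∀ b : Bool, bernoulliMeasure q {b}
      = ENNReal.ofReal (if b then q else 1 - q) := by
    intro b; cases b
    · simpa using bernoulli_false q hq0.le hq1
    · simpa using bernoulli_true q hq0.le hq1
  have hsing : ∀ x : ι → Bool, μ {x} = ∏ i, bernoulliMeasure q {x i} := by
    intro x
    rw [← Set.univ_pi_singleton x, hμdef, Measure.pi_pi]
  -- Step 1 : exponential Markov bound for each l ≥ 0
  have step : ∀ l : ℝ, 0 ≤ l → μ E ≤ ENNReal.ofReal
      (Real.exp (-(S.card * (-Real.log (1 - q + q * Real.exp (-l)) - l * q')))) := by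
    intro l hl
    set B := 1 - q + q * Real.exp (-l) with hBdef
    have hB : 0 < B := by nlinarith [Real.exp_pos (-l)]
    have htot : ∫⁻ x, ENNReal.ofReal
        (Real.exp (-l * ∑ i ∈ S, (if x i = true then (1:ℝ) else 0))) ∂μ
        = ENNReal.ofReal (B ^ S.card) := by
      have hre : ∀ x : ι → Bool, (-l * ∑ i ∈ S, (if x i = true then (1:ℝ) else 0))
          = ∑ i : ι, (-l * (if i ∈ S then (if x i = true then (1:ℝ) else 0) else 0)) := by
        intro x
        rw [Finset.mul_sum]
        symm
        calc ∑ i : ι, -l * (if i ∈ S then (if x i = true then (1:ℝ) else 0) else 0)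
            = ∑ i : ι, (if i ∈ S then -l * (if x i = true then (1:ℝ) else 0) else 0) := by
              refine Finset.sum_congr rfl fun i _ => ?_
              split <;> simp
          _ = ∑ i ∈ S, -l * (if x i = true then (1:ℝ) else 0) := by
              rw [Finset.sum_ite_mem, Finset.univ_inter]
      have hrew : ∀ x : ι → Bool, ENNReal.ofReal
          (Real.exp (-l * ∑ i ∈ S, (if x i = true then (1:ℝ) else 0)))
          = ∏ i : ι, ENNReal.ofReal
              (Real.exp (-l * (if i ∈ S then (if x i = true then (1:ℝ) else 0) else 0))) := by
        intro x
        rw [hre x, Real.exp_sum, ENNReal.ofReal_prod_of_nonneg]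
        intro i _; exact (Real.exp_pos _).le
      rw [lintegral_fintype]
      calc
        ∑ x : ι → Bool, ENNReal.ofReal
            (Real.exp (-l * ∑ i ∈ S, (if x i = true then (1:ℝ) else 0))) * μ {x}
            = ∑ x : ι → Bool, ∏ i : ι,
              (ENNReal.ofReal (Real.exp (-l * (if i ∈ S then (if x i = true then (1:ℝ) else 0)
                else 0))) * bernoulliMeasure q {x i}) := by
              refine Finset.sum_congr rfl fun x _ => ?_
              rw [hrew x, hsing x, ← Finset.prod_mul_distrib]
        _ = ∏ i : ι, ∑ b : Bool,
              (ENNReal.ofReal (Real.exp (-l * (if i ∈ S then (if b = true then (1:ℝ) else 0)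
                else 0))) * bernoulliMeasure q {b}) := by
              rw [Fintype.prod_sum]
        _ = ∏ i : ι, (if i ∈ S then ENNReal.ofReal B else 1) := by
              refine Finset.prod_congr rfl fun i _ => ?_
              rw [Fintype.sum_bool]
              by_cases hi : i ∈ S
              · simp only [hi, if_true, hν1, Bool.false_eq_true, if_false, mul_one, mul_zero,
                  Real.exp_zero, ENNReal.ofReal_one, one_mul]
                rw [← ENNReal.ofReal_mul (Real.exp_pos _).le,
                  ← ENNReal.ofReal_add (by positivity) (by linarith)]
                congr 1
                rw [hBdef]; ring
              · simp only [hi, if_false, hν1, Bool.false_eq_true, mul_zero, Real.exp_zero,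
                  ENNReal.ofReal_one, one_mul, if_true]
                rw [← ENNReal.ofReal_add hq0.le (by linarith)]
                norm_num
        _ = ENNReal.ofReal (B ^ S.card) := by
              rw [Finset.prod_ite_mem, Finset.univ_inter, Finset.prod_const,
                ← ENNReal.ofReal_pow hB.le]
    have hmark : ENNReal.ofReal (Real.exp (-l * a)) * μ E ≤ ENNReal.ofReal (B ^ S.card) := by
      rw [← htot, ← setLIntegral_const E (ENNReal.ofReal (Real.exp (-l * a)))]
      calc
        ∫⁻ _ in E, ENNReal.ofReal (Real.exp (-l * a)) ∂μ
            ≤ ∫⁻ x in E, ENNReal.ofReal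
              (Real.exp (-l * ∑ i ∈ S, (if x i = true then (1:ℝ) else 0))) ∂μ := by
              refine setLIntegral_mono (measurable_of_countable _) fun x hx => ?_
              refine ENNReal.ofReal_le_ofReal (Real.exp_le_exp.mpr ?_)
              have hx' : (∑ i ∈ S, (if x i = true then (1:ℝ) else 0)) ≤ a := hx
              nlinarith
        _ ≤ ∫⁻ x, ENNReal.ofReal
              (Real.exp (-l * ∑ i ∈ S, (if x i = true then (1:ℝ) else 0))) ∂μ :=
              lintegral_mono' Measure.restrict_le_self (le_refl _)
    have hexpcancel : ENNReal.ofReal (Real.exp (l * a)) * ENNReal.ofReal (Real.exp (-l * a))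
        = 1 := by
      rw [← ENNReal.ofReal_mul (Real.exp_pos _).le, ← Real.exp_add]
      norm_num
    calc
      μ E = ENNReal.ofReal (Real.exp (l * a))
          * (ENNReal.ofReal (Real.exp (-l * a)) * μ E) := by
          rw [← mul_assoc, hexpcancel, one_mul]
      _ ≤ ENNReal.ofReal (Real.exp (l * a)) * ENNReal.ofReal (B ^ S.card) :=
          mul_le_mul_right hmark _
      _ = ENNReal.ofReal (Real.exp (l * a) * B ^ S.card) :=
          (ENNReal.ofReal_mul (Real.exp_pos _).le).symm
      _ ≤ ENNReal.ofReal (Real.exp (-(S.card * (-Real.log B - l * q')))) := by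
          refine ENNReal.ofReal_le_ofReal ?_
          have hxp : Real.exp (-(S.card * (-Real.log B - l * q')))
              = Real.exp (l * q' * S.card) * B ^ S.card := by
            rw [show (-(S.card * (-Real.log B - l * q'))) = l * q' * S.card
                + S.card * Real.log B by ring, Real.exp_add, Real.exp_nat_mul,
              Real.exp_log hB]
          rw [hxp]
          have h1 : Real.exp (l * a) ≤ Real.exp (l * q' * S.card) := by
            refine Real.exp_le_exp.mpr ?_
            calc l * a ≤ l * (q' * S.card) := by
                  exact mul_le_mul_of_nonneg_left ha hl
              _ = l * q' * S.card := by ring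
          exact mul_le_mul_of_nonneg_right h1 (by positivity)
  -- Step 2 : pass to the supremum
  rcases Nat.eq_zero_or_pos S.card with h0 | hpos
  · rw [h0]
    simp only [Nat.cast_zero, zero_mul, neg_zero, Real.exp_zero, ENNReal.ofReal_one]
    exact prob_le_one
  by_cases hbdd : BddAbove {x | ∃ l : ℝ, 0 ≤ l ∧
      x = -Real.log (1 - q + q * Real.exp (-l)) - l * q'}
  · by_cases hμ0 : μ E = 0
    · rw [hμ0]; exact zero_le
    have hfin : μ E ≠ ⊤ := measure_ne_top μ E
    set t := (μ E).toReal with htdef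
    have ht0 : 0 < t := ENNReal.toReal_pos hμ0 hfin
    have hcard : (0:ℝ) < S.card := by exact_mod_cast hpos
    have hub : ∀ x ∈ {x | ∃ l : ℝ, 0 ≤ l ∧
        x = -Real.log (1 - q + q * Real.exp (-l)) - l * q'}, x ≤ -Real.log t / S.card := by
      rintro x ⟨l, hl, rfl⟩
      have h1 := step l hl
      have h2 : t ≤ Real.exp (-(S.card * (-Real.log (1 - q + q * Real.exp (-l)) - l * q'))) :=
        ENNReal.toReal_le_of_le_ofReal (Real.exp_pos _).le h1
      have h3 : Real.log t ≤ -(S.card * (-Real.log (1 - q + q * Real.exp (-l)) - l * q')) := by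
        calc Real.log t ≤ Real.log (Real.exp (-(S.card *
              (-Real.log (1 - q + q * Real.exp (-l)) - l * q')))) :=
              Real.log_le_log ht0 h2
          _ = _ := Real.log_exp _
      rw [le_div_iff₀ hcard]
      nlinarith
    have hψ : chernoffPsi q' q ≤ -Real.log t / S.card :=
      csSup_le ⟨0, psi_set_zero_mem q' q⟩ hub
    have hlog : Real.log t ≤ -(S.card * chernoffPsi q' q) := by
      rw [le_div_iff₀ hcard] at hψ
      nlinarith
    have ht : t ≤ Real.exp (-(S.card * chernoffPsi q' q)) := by
      calc t = Real.exp (Real.log t) := (Real.exp_log ht0).symm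
        _ ≤ _ := Real.exp_le_exp.mpr hlog
    calc μ E = ENNReal.ofReal t := (ENNReal.ofReal_toReal hfin).symm
      _ ≤ _ := ENNReal.ofReal_le_ofReal ht
  · have : chernoffPsi q' q = 0 := by
      rw [chernoffPsi, csSup_of_not_bddAbove hbdd, Real.sSup_empty]
    rw [this]
    simp only [mul_zero, neg_zero, Real.exp_zero, ENNReal.ofReal_one]
    exact prob_le_one

lemma s0_card (n : ℕ) (σ : Fin n → Bool) :
    ((Finset.univ.filter (fun e : {e : Fin n × Fin n // e.1 < e.2} =>
        σ e.1.1 = true ∧ σ e.1.2 = true)).card : ℝ) * 2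
      = ((Finset.univ.filter (fun i => σ i = true)).card : ℝ)
        * (((Finset.univ.filter (fun i => σ i = true)).card : ℝ) - 1) := by
  classical
  set occ := Finset.univ.filter (fun i => σ i = true) with hocc
  set S₀ := Finset.univ.filter (fun e : {e : Fin n × Fin n // e.1 < e.2} =>
    σ e.1.1 = true ∧ σ e.1.2 = true) with hS₀
  set L := occ.offDiag.filter (fun e => e.1 < e.2) with hL
  set Gt := occ.offDiag.filter (fun e => e.2 < e.1) with hGt
  have h1 : L.card + Gt.card = occ.offDiag.card := by
    have h0 := Finset.card_filter_add_card_filter_not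
      (s := occ.offDiag) (p := fun e : Fin n × Fin n => e.1 < e.2)
    have he : occ.offDiag.filter (fun e : Fin n × Fin n => ¬ e.1 < e.2) = Gt := by
      rw [hGt]
      refine Finset.filter_congr fun e he => ?_
      have hne : e.1 ≠ e.2 := (Finset.mem_offDiag.mp he).2.2
      constructor
      · intro h; exact lt_of_le_of_ne (not_lt.mp h) (Ne.symm hne)
      · intro h; exact not_lt.mpr h.le
    rw [he] at h0
    exact h0
  have h2 : L.card = Gt.card := by
    refine Finset.card_bij (fun e _ => (e.2, e.1)) ?_ ?_ ?_
    · intro e he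
      rw [hL, Finset.mem_filter, Finset.mem_offDiag] at he
      rw [hGt, Finset.mem_filter, Finset.mem_offDiag]
      exact ⟨⟨he.1.2.1, he.1.1, fun h => he.1.2.2 h.symm⟩, he.2⟩
    · intro e he e' he' h
      have h1 := congrArg Prod.fst h
      have h2 := congrArg Prod.snd h
      simp at h1 h2
      exact Prod.ext h2 h1
    · intro b hb
      rw [hGt, Finset.mem_filter, Finset.mem_offDiag] at hb
      refine ⟨(b.2, b.1), ?_, rfl⟩
      rw [hL, Finset.mem_filter, Finset.mem_offDiag]
      exact ⟨⟨hb.1.2.1, hb.1.1, fun h => hb.1.2.2 h.symm⟩, hb.2⟩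
  have h3 : S₀.card = L.card := by
    refine Finset.card_bij (fun e _ => e.1) ?_ ?_ ?_
    · intro e he
      rw [hS₀, Finset.mem_filter] at he
      rw [hL, Finset.mem_filter, Finset.mem_offDiag]
      refine ⟨⟨?_, ?_, ne_of_lt e.2⟩, e.2⟩
      · rw [hocc, Finset.mem_filter]; exact ⟨Finset.mem_univ _, he.2.1⟩
      · rw [hocc, Finset.mem_filter]; exact ⟨Finset.mem_univ _, he.2.2⟩
    · intro e he e' he' h
      exact Subtype.ext h
    · intro b hb
      rw [hL, Finset.mem_filter, Finset.mem_offDiag] at hb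
      have hb1 : σ b.1 = true := by
        have := hb.1.1; rw [hocc, Finset.mem_filter] at this; exact this.2
      have hb2 : σ b.2 = true := by
        have := hb.1.2.1; rw [hocc, Finset.mem_filter] at this; exact this.2
      refine ⟨⟨b, hb.2⟩, ?_, rfl⟩
      rw [hS₀, Finset.mem_filter]
      exact ⟨Finset.mem_univ _, hb1, hb2⟩
  have h4 : occ.offDiag.card = occ.card * occ.card - occ.card := Finset.offDiag_card occ
  have h5 : S₀.card + S₀.card + occ.card = occ.card * occ.card := by
    have hle : occ.card ≤ occ.card * occ.card := by
      rcases Nat.eq_zero_or_pos occ.card with h | h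
      · simp [h]
      · exact Nat.le_mul_of_pos_left _ h
    omega
  have h6 := congrArg (Nat.cast (R := ℝ)) h5
  push_cast at h6
  nlinarith [h6]

lemma key_count (n : ℕ) (σ : Fin n → Bool) (Ed : {e : Fin n × Fin n // e.1 < e.2} → Bool)
    (p' r' : ℝ) (hp'0 : 0 ≤ p') (hp'1 : p' ≤ 1)
    (hK : (largestCompCard n (σ, Ed) : ℝ) ≤ p' * r' * n)
    (hm : r' * n < ((Finset.univ.filter (fun i => σ i = true)).card : ℝ)) :
    ((Finset.univ.filter (fun e : {e : Fin n × Fin n // e.1 < e.2} =>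
        (σ e.1.1 = true ∧ σ e.1.2 = true) ∧ Ed e = true)).card : ℝ)
      ≤ p' * (Finset.univ.filter (fun e : {e : Fin n × Fin n // e.1 < e.2} =>
          σ e.1.1 = true ∧ σ e.1.2 = true)).card := by
  classical
  set G := percGraph n (σ, Ed) with hG
  set occ := Finset.univ.filter (fun i => σ i = true) with hocc
  set S₀ := Finset.univ.filter (fun e : {e : Fin n × Fin n // e.1 < e.2} =>
    σ e.1.1 = true ∧ σ e.1.2 = true) with hS₀
  set OccE := Finset.univ.filter (fun e : {e : Fin n × Fin n // e.1 < e.2} =>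
    (σ e.1.1 = true ∧ σ e.1.2 = true) ∧ Ed e = true) with hOccE
  set K := largestCompCard n (σ, Ed) with hKdef
  -- occupied edges give adjacency
  have hadj : ∀ e : {e : Fin n × Fin n // e.1 < e.2}, e ∈ OccE → G.Adj e.1.1 e.1.2 := by
    intro e he
    rw [hOccE, Finset.mem_filter] at he
    refine ⟨he.2.1.1, he.2.1.2, Or.inl ⟨e.2, ?_⟩⟩
    have : (⟨(e.1.1, e.1.2), e.2⟩ : {e : Fin n × Fin n // e.1 < e.2}) = e := Subtype.ext rfl
    rw [this]
    exact he.2.2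
  set Rf : Fin n → Finset (Fin n) := fun i => Finset.univ.filter (fun j => G.Reachable i j)
    with hRf
  have hcompK : ∀ i, σ i = true → (Rf i).card ≤ K := by
    intro i hi
    have hbdd : BddAbove {k | ∃ i, σ i = true ∧
        k = Set.ncard {j | (percGraph n (σ, Ed)).Reachable i j}} := by
      refine ⟨n, ?_⟩
      rintro k ⟨j, hj, rfl⟩
      have : {x | (percGraph n (σ, Ed)).Reachable j x}.ncard ≤ (Set.univ : Set (Fin n)).ncard :=
        Set.ncard_le_ncard (Set.subset_univ _) Set.finite_univ
      simpa [Set.ncard_univ] using this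
    have hmem : (Rf i).card ∈ {k | ∃ i, σ i = true ∧
        k = Set.ncard {j | (percGraph n (σ, Ed)).Reachable i j}} := by
      refine ⟨i, hi, ?_⟩
      have : {j | (percGraph n (σ, Ed)).Reachable i j} = ↑(Rf i) := by
        ext j; simp [hRf, hG]
      rw [this, Set.ncard_coe_finset]
    exact le_csSup hbdd hmem
  set Fa : Fin n → Finset _ := fun i => OccE.filter (fun e => e.1.1 = i) with hFa
  set Fb : Fin n → Finset _ := fun i => OccE.filter (fun e => e.1.2 = i) with hFb
  have hsum : OccE.card + OccE.card = ∑ i : Fin n, ((Fa i).card + (Fb i).card) := by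
    rw [Finset.sum_add_distrib]
    congr 1
    · exact Finset.card_eq_sum_card_fiberwise (fun e _ => Finset.mem_univ e.1.1)
    · exact Finset.card_eq_sum_card_fiberwise (fun e _ => Finset.mem_univ e.1.2)
  have hterm : ∀ i : Fin n,
      (((Fa i).card + (Fb i).card : ℕ) : ℝ) ≤ (if σ i = true then (K:ℝ) - 1 else 0) := by
    intro i
    by_cases hi : σ i = true
    · rw [if_pos hi]
      have hdisj : Disjoint (Fa i) (Fb i) := by
        rw [Finset.disjoint_left]
        intro e hea heb
        rw [hFa, Finset.mem_filter] at hea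
        rw [hFb, Finset.mem_filter] at heb
        have := e.2
        rw [hea.2, heb.2] at this
        exact lt_irrefl i this
      have hcu : (Fa i ∪ Fb i).card = (Fa i).card + (Fb i).card :=
        Finset.card_union_of_disjoint hdisj
      set Ni := (Rf i).erase i with hNi
      have hmaps : ∀ e ∈ Fa i ∪ Fb i,
          (if e.1.1 = i then e.1.2 else e.1.1) ∈ Ni := by
        intro e he
        rcases Finset.mem_union.mp he with h | h
        · rw [hFa, Finset.mem_filter] at h
          rw [if_pos h.2, hNi, Finset.mem_erase]
          constructor
          · intro hcontra
            have := e.2; rw [h.2, hcontra] at this; exact lt_irrefl i this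
          · rw [hRf, Finset.mem_filter]
            refine ⟨Finset.mem_univ _, ?_⟩
            have := (hadj e h.1).reachable
            rw [h.2] at this
            exact this
        · rw [hFb, Finset.mem_filter] at h
          have hne : ¬ e.1.1 = i := by
            intro hcontra
            have := e.2; rw [hcontra, h.2] at this; exact lt_irrefl i this
          rw [if_neg hne, hNi, Finset.mem_erase]
          refine ⟨hne, ?_⟩
          rw [hRf, Finset.mem_filter]
          refine ⟨Finset.mem_univ _, ?_⟩
          have := ((hadj e h.1).reachable).symm
          rw [h.2] at this
          exact this
      have hinj : ∀ e ∈ Fa i ∪ Fb i, ∀ e' ∈ Fa i ∪ Fb i,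
          (if e.1.1 = i then e.1.2 else e.1.1) = (if e'.1.1 = i then e'.1.2 else e'.1.1)
          → e = e' := by
        intro e he e' he' heq
        have hFbmem : ∀ f, f ∈ Fa i ∪ Fb i → ¬ f.1.1 = i → f.1.2 = i := by
          intro f hf hfne
          rcases Finset.mem_union.mp hf with h | h
          · rw [hFa, Finset.mem_filter] at h; exact absurd h.2 hfne
          · rw [hFb, Finset.mem_filter] at h; exact h.2
        by_cases h1 : e.1.1 = i <;> by_cases h2 : e'.1.1 = i
        · rw [if_pos h1, if_pos h2] at heq
          exact Subtype.ext (Prod.ext (h1.trans h2.symm) heq)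
        · rw [if_pos h1, if_neg h2] at heq
          exfalso
          have h3 : e'.1.2 = i := hFbmem e' he' h2
          have hlt1 := e.2
          have hlt2 := e'.2
          rw [h1, heq] at hlt1
          rw [h3] at hlt2
          exact lt_irrefl i (hlt1.trans hlt2)
        · rw [if_neg h1, if_pos h2] at heq
          exfalso
          have h3 : e.1.2 = i := hFbmem e he h1
          have hlt1 := e.2
          have hlt2 := e'.2
          rw [h3] at hlt1
          rw [h2, ← heq] at hlt2
          exact lt_irrefl i (hlt2.trans hlt1)
        · rw [if_neg h1, if_neg h2] at heq
          have h3 : e.1.2 = i := hFbmem e he h1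
          have h4 : e'.1.2 = i := hFbmem e' he' h2
          exact Subtype.ext (Prod.ext heq (h3.trans h4.symm))
      have hcle : (Fa i ∪ Fb i).card ≤ Ni.card :=
        Finset.card_le_card_of_injOn _ hmaps (fun e he e' he' h => hinj e he e' he' h)
      have himem : i ∈ Rf i := by
        rw [hRf, Finset.mem_filter]
        exact ⟨Finset.mem_univ _, SimpleGraph.Reachable.refl i⟩
      have hNicard : Ni.card + 1 = (Rf i).card := by
        rw [hNi, Finset.card_erase_of_mem himem]
        have : 1 ≤ (Rf i).card := Finset.card_pos.mpr ⟨i, himem⟩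
        omega
      have hfinal : (Fa i).card + (Fb i).card + 1 ≤ K := by
        rw [← hcu]
        have := hcompK i hi
        omega
      have := (Nat.cast_le (α := ℝ)).mpr hfinal
      push_cast at this ⊢
      linarith
    · rw [if_neg hi]
      have hFae : Fa i = ∅ := by
        rw [hFa, Finset.filter_eq_empty_iff]
        intro e he
        rw [hOccE, Finset.mem_filter] at he
        intro hcontra
        rw [hcontra] at he
        exact hi he.2.1.1
      have hFbe : Fb i = ∅ := by
        rw [hFb, Finset.filter_eq_empty_iff]
        intro e he
        rw [hOccE, Finset.mem_filter] at he
        intro hcontra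
        rw [hcontra] at he
        exact hi he.2.1.2
      rw [hFae, hFbe]
      norm_num
  -- put it together
  have hdouble : (OccE.card : ℝ) * 2 ≤ (occ.card : ℝ) * ((K:ℝ) - 1) := by
    have hcast := congrArg (Nat.cast (R := ℝ)) hsum
    push_cast at hcast
    have hsb : ∑ i : Fin n, (((Fa i).card + (Fb i).card : ℕ) : ℝ)
        ≤ ∑ i : Fin n, (if σ i = true then (K:ℝ) - 1 else 0) :=
      Finset.sum_le_sum (fun i _ => hterm i)
    have hsc : ∑ i : Fin n, (if σ i = true then (K:ℝ) - 1 else 0)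
        = (occ.card : ℝ) * ((K:ℝ) - 1) := by
      rw [← Finset.sum_filter, Finset.sum_const, nsmul_eq_mul]
    push_cast at hsb
    linarith
  have hKm : (K:ℝ) - 1 ≤ p' * ((occ.card : ℝ) - 1) := by
    have h1 : p' * (r' * n) ≤ p' * (occ.card : ℝ) := mul_le_mul_of_nonneg_left hm.le hp'0
    nlinarith
  have h2s := s0_card n σ
  rw [← hocc, ← hS₀] at h2s
  have hmono : (occ.card : ℝ) * ((K:ℝ) - 1) ≤ (occ.card : ℝ) * (p' * ((occ.card : ℝ) - 1)) :=
    mul_le_mul_of_nonneg_left hKm (Nat.cast_nonneg _)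
  nlinarith

/-- For site-bond percolation on the complete graph K_n with site density r
and bond density p, for all r' ∈ [0, r) and p' ∈ [0, p) and n ≥ 1,
P(|C_n| ≤ p' r' n) ≤ exp(−n ψ(r', r)) + exp(−(1/2)(n²(r')² − n) ψ(p', p)). -/
theorem complete_graph_site_bond_largest_component (n : ℕ) (hn : 1 ≤ n)
    (r p r' p' : ℝ) (hr1 : r ≤ 1) (hp1 : p ≤ 1)
    (hr' : 0 ≤ r') (hr'r : r' < r) (hp' : 0 ≤ p') (hp'p : p' < p) :
    siteBondMeasure n r p
        {ω : SiteBondConfig n | (largestCompCard n ω : ℝ) ≤ p' * r' * n}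
      ≤ ENNReal.ofReal (Real.exp (-(n * chernoffPsi r' r))) +
        ENNReal.ofReal
          (Real.exp (-(1 / 2 * ((n : ℝ) ^ 2 * r' ^ 2 - n) * chernoffPsi p' p))) := by
  classical
  have hp'1 : p' ≤ 1 := le_trans hp'p.le hp1
  have hr'1 : r' ≤ 1 := le_trans hr'r.le hr1
  set μV := Measure.pi fun _ : Fin n => bernoulliMeasure r with hμV
  set μE := Measure.pi fun _ : {e : Fin n × Fin n // e.1 < e.2} => bernoulliMeasure p with hμE
  set T := {ω : SiteBondConfig n | (largestCompCard n ω : ℝ) ≤ p' * r' * n} with hT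
  set A : Set (Fin n → Bool) :=
    {x | (∑ i ∈ (Finset.univ : Finset (Fin n)), (if x i = true then (1:ℝ) else 0)) ≤ r' * n}
    with hA
  have hTsub : T ⊆ (A ×ˢ Set.univ) ∪ (T ∩ (Aᶜ ×ˢ Set.univ)) := by
    intro ω hω
    by_cases h : ω.1 ∈ A
    · exact Or.inl ⟨h, trivial⟩
    · exact Or.inr ⟨hω, h, trivial⟩
  have hmain : siteBondMeasure n r p T
      ≤ μV.prod μE (A ×ˢ Set.univ) + μV.prod μE (T ∩ (Aᶜ ×ˢ Set.univ)) := by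
    rw [siteBondMeasure, ← hμV, ← hμE]
    exact le_trans (measure_mono hTsub) (measure_union_le _ _)
  refine le_trans hmain (add_le_add ?_ ?_)
  -- vertex part
  · rw [Measure.prod_prod, measure_univ, mul_one]
    have h1 := chernoff_bound (Finset.univ : Finset (Fin n)) r r' (r' * n) hr' hr'r hr1
      (by rw [Finset.card_univ, Fintype.card_fin])
    rw [Finset.card_univ, Fintype.card_fin] at h1
    exact h1
  -- edge part
  · have hTmeas : MeasurableSet (T ∩ (Aᶜ ×ˢ Set.univ)) := (Set.to_countable _).measurableSet
    rw [Measure.prod_apply hTmeas]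
    set c := ENNReal.ofReal
      (Real.exp (-(1 / 2 * ((n : ℝ) ^ 2 * r' ^ 2 - n) * chernoffPsi p' p))) with hc
    have hslice : ∀ σ : Fin n → Bool, μE (Prod.mk σ ⁻¹' (T ∩ (Aᶜ ×ˢ Set.univ))) ≤ c := by
      intro σ
      by_cases hAσ : σ ∈ A
      · have hempty : Prod.mk σ ⁻¹' (T ∩ (Aᶜ ×ˢ Set.univ)) = ∅ := by
          ext Ed
          simp only [Set.mem_preimage, Set.mem_inter_iff, Set.mem_prod, Set.mem_compl_iff,
            Set.mem_empty_iff_false, iff_false]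
          rintro ⟨-, h2, -⟩
          exact h2 hAσ
        rw [hempty, measure_empty]
        exact zero_le
      · have hmσ : r' * ↑n < ((Finset.univ.filter (fun i => σ i = true)).card : ℝ) := by
          have h := not_le.mp (by simpa [hA] using hAσ)
          exact h
        set S₀ := Finset.univ.filter (fun e : {e : Fin n × Fin n // e.1 < e.2} =>
          σ e.1.1 = true ∧ σ e.1.2 = true) with hS₀
        have hsub2 : Prod.mk σ ⁻¹' (T ∩ (Aᶜ ×ˢ Set.univ)) ⊆
            {x | (∑ e ∈ S₀, (if x e = true then (1:ℝ) else 0)) ≤ p' * S₀.card} := by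
          rintro Ed ⟨hT1, -⟩
          have hKσ : (largestCompCard n (σ, Ed) : ℝ) ≤ p' * r' * n := hT1
          have hkey := key_count n σ Ed p' r' hp' hp'1 hKσ hmσ
          simp only [Set.mem_setOf_eq, Finset.sum_boole]
          rw [hS₀, Finset.filter_filter]
          exact_mod_cast hkey
        have hcb := chernoff_bound S₀ p p' (p' * S₀.card) hp' hp'p hp1 (le_refl _)
        refine le_trans (measure_mono hsub2) (le_trans hcb ?_)
        refine ENNReal.ofReal_le_ofReal (Real.exp_le_exp.mpr ?_)
        rw [neg_le_neg_iff]
        refine mul_le_mul_of_nonneg_right ?_ (chernoffPsi_nonneg p' p)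
        -- 1/2 * (n² r'² − n) ≤ S₀.card
        have h2s := s0_card n σ
        rw [← hS₀] at h2s
        set m : ℝ := ((Finset.univ.filter (fun i => σ i = true)).card : ℝ) with hm
        have hn1 : (1:ℝ) ≤ n := by exact_mod_cast hn
        have hmlb : r' ^ 2 * (n:ℝ) ^ 2 - n ≤ m * (m - 1) := by
          by_cases h1 : 1 ≤ r' * n
          · have ha : (0:ℝ) < m - r' * n := by linarith
            have hb : (0:ℝ) ≤ m + r' * n - 1 := by nlinarith
            nlinarith [mul_nonneg ha.le hb, mul_nonneg hr' (Nat.cast_nonneg n)]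
          · have hmn : (0:ℝ) ≤ m * (m - 1) := by
              have : ((Finset.univ.filter (fun i => σ i = true)).card : ℝ) = 0
                  ∨ 1 ≤ ((Finset.univ.filter (fun i => σ i = true)).card : ℝ) := by
                rcases Nat.eq_zero_or_pos (Finset.univ.filter (fun i => σ i = true)).card
                  with h | h
                · left; exact_mod_cast h
                · right; exact_mod_cast h
              rw [← hm] at this
              rcases this with h | h
              · rw [h]; ring_nf; exact le_refl 0
              · nlinarith
            have hrn : 0 ≤ r' * n := mul_nonneg hr' (Nat.cast_nonneg n)
            nlinarith
        linarith [h2s, hmlb]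
    calc ∫⁻ σ, μE (Prod.mk σ ⁻¹' (T ∩ (Aᶜ ×ˢ Set.univ))) ∂μV
        ≤ ∫⁻ _, c ∂μV := lintegral_mono hslice
      _ = c := by rw [lintegral_const, measure_univ, mul_one]
end
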